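/- arXiv:1511.08304 — 5 statements merged into one kernel-verified Lean document; each statement's English description precedes it below -/
import Mathlib

section
/- Let (g, [·,…,·]) be an n-Lie superalgebra and S a supertrace of the bracket. Then the induced (n+1)-Lie superalgebra (g, [·,…,·]_S) is solvable; in fact its second derived ideal vanishes: D²(g_S) = {0}. -/
/-- An `n`-Lie superalgebra with `n = m + 1`: a `ℤ₂`-graded vector space `V = even ⊕ odd`
with an `n`-linear bracket that is degree-additive, graded skew-symmetric, and satisfies
the graded Filippov identity. -/
structure NLieSuper (K V : Type) [Field K] [AddCommGroup V] [Module K V] (m : ℕ) where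
  even : Submodule K V
  odd : Submodule K V
  sup_eq : even ⊔ odd = ⊤
  inf_eq : even ⊓ odd = ⊥
  bracket : (Fin (m + 1) → V) → V
  bracket_add : ∀ (x : Fin (m + 1) → V) (i : Fin (m + 1)) (a b : V),
    bracket (Function.update x i (a + b)) =
      bracket (Function.update x i a) + bracket (Function.update x i b)
  bracket_smul : ∀ (x : Fin (m + 1) → V) (i : Fin (m + 1)) (c : K) (a : V),
    bracket (Function.update x i (c • a)) = c • bracket (Function.update x i a)
  degree : ∀ (p : Fin (m + 1) → ℕ) (x : Fin (m + 1) → V),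
    (∀ i, if p i % 2 = 0 then x i ∈ even else x i ∈ odd) →
    (if (∑ i, p i) % 2 = 0 then bracket x ∈ even else bracket x ∈ odd)
  skew : ∀ (p : Fin (m + 1) → ℕ) (x : Fin (m + 1) → V),
    (∀ i, if p i % 2 = 0 then x i ∈ even else x i ∈ odd) →
    ∀ i : Fin m,
      bracket (x ∘ Equiv.swap i.castSucc i.succ) =
        (-(-1 : K) ^ (p i.castSucc * p i.succ)) • bracket x
  filippov : ∀ (q : Fin m → ℕ) (y : Fin m → V) (p : Fin (m + 1) → ℕ) (x : Fin (m + 1) → V),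
    (∀ i, if q i % 2 = 0 then y i ∈ even else y i ∈ odd) →
    (∀ i, if p i % 2 = 0 then x i ∈ even else x i ∈ odd) →
    bracket (Fin.snoc y (bracket x)) =
      ∑ i : Fin (m + 1),
        ((-1 : K) ^ ((∑ j ∈ Finset.univ.filter (fun j => j < i), p j) * (∑ j, q j))) •
          bracket (Function.update x i (bracket (Fin.snoc y (x i))))

variable {K V : Type} [Field K] [AddCommGroup V] [Module K V] {m : ℕ}

/-- `v` is homogeneous of parity `d` (mod 2). -/
def NLieSuper.Homog (A : NLieSuper K V m) (v : V) (d : ℕ) : Prop :=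
  if d % 2 = 0 then v ∈ A.even else v ∈ A.odd

/-- A tuple of homogeneous elements with given parities. -/
def NLieSuper.HomogTuple (A : NLieSuper K V m) {k : ℕ} (p : Fin k → ℕ) (x : Fin k → V) : Prop :=
  ∀ i, A.Homog (x i) (p i)

/-- The induced `(n+1)`-ary bracket
`[x₁,…,x_{n+1}]_S = Σ_i (−1)^{i−1}(−1)^{|x_i|(|x₁|+⋯+|x_{i−1}|)} S(x_i)[x₁,…,x̂_i,…,x_{n+1}]`
on homogeneous tuples with parities `p`. -/
def NLieSuper.induced (A : NLieSuper K V m) (S : V →ₗ[K] K)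
    (p : Fin (m + 2) → ℕ) (x : Fin (m + 2) → V) : V :=
  ∑ i : Fin (m + 2),
    ((-1 : K) ^ ((i : ℕ) + p i * ∑ j ∈ Finset.univ.filter (fun j => j < i), p j)) •
      S (x i) • A.bracket (x ∘ i.succAbove)

/-- the induced `(n+1)`-Lie superalgebra is solvable: its second derived
ideal vanishes, i.e. any induced bracket of elements of the first derived ideal
(the span of all induced brackets) is zero. -/
theorem induced_solvable (A : NLieSuper K V m) (S : V →ₗ[K] K)
    (hS_bracket : ∀ x : Fin (m + 1) → V, S (A.bracket x) = 0)
    (hS_odd : ∀ v ∈ A.odd, S v = 0) :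
    ∀ (p : Fin (m + 2) → ℕ) (x : Fin (m + 2) → V),
      A.HomogTuple p x →
      (∀ i, x i ∈ Submodule.span K
        {v | ∃ (q : Fin (m + 2) → ℕ) (y : Fin (m + 2) → V),
          A.HomogTuple q y ∧ v = A.induced S q y}) →
      A.induced S p x = 0 := by
  intro p x _ hspan
  have hker : ∀ i, S (x i) = 0 := by
    intro i
    have hle : Submodule.span K
        {v | ∃ (q : Fin (m + 2) → ℕ) (y : Fin (m + 2) → V),
          A.HomogTuple q y ∧ v = A.induced S q y} ≤ LinearMap.ker S := by
      rw [Submodule.span_le]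
      rintro v ⟨q, y, hy, rfl⟩
      simp [LinearMap.mem_ker, NLieSuper.induced, hS_bracket]
    exact hle (hspan i)
  simp [NLieSuper.induced, hker]
end

section
/- Let (g, [·,…,·]) be an n-Lie superalgebra with supertrace S, and let g_S denote the induced (n+1)-Lie superalgebra. Then the descending central series satisfy C^p(g_S) ⊆ C^p(g) for all p ∈ ℕ. -/
variable {K V : Type} [Field K] [AddCommGroup V] [Module K V] {m : ℕ}

/-- Descending central series: `C 0 = top`, `C (p+1) = [C p, g, ..., g]`. -/
def NLieSuper.lcs (A : NLieSuper K V m) : ℕ → Submodule K V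
  | 0 => ⊤
  | p + 1 => Submodule.span K
      {v | ∃ x : Fin (m + 1) → V, x 0 ∈ NLieSuper.lcs A p ∧ v = A.bracket x}

/-- Descending central series of the induced `(n+1)`-Lie superalgebra. -/
def NLieSuper.lcsInd (A : NLieSuper K V m) (S : V →ₗ[K] K) : ℕ → Submodule K V
  | 0 => ⊤
  | p + 1 => Submodule.span K
      {v | ∃ (q : Fin (m + 2) → ℕ) (x : Fin (m + 2) → V),
        A.HomogTuple q x ∧ x 0 ∈ NLieSuper.lcsInd A S p ∧ v = A.induced S q x}

/-- aux -/
lemma S_induced_zero (A : NLieSuper K V m) (S : V →ₗ[K] K)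
    (hS_bracket : ∀ x : Fin (m + 1) → V, S (A.bracket x) = 0)
    (q : Fin (m + 2) → ℕ) (x : Fin (m + 2) → V) : S (A.induced S q x) = 0 := by
  simp [NLieSuper.induced, hS_bracket]

lemma S_lcsInd_zero (A : NLieSuper K V m) (S : V →ₗ[K] K)
    (hS_bracket : ∀ x : Fin (m + 1) → V, S (A.bracket x) = 0)
    (p : ℕ) : ∀ v ∈ A.lcsInd S (p + 1), S v = 0 := by
  intro v hv
  have h : A.lcsInd S (p + 1) ≤ LinearMap.ker S := by
    rw [NLieSuper.lcsInd, Submodule.span_le]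
    rintro w ⟨q, x, hq, hx, rfl⟩
    exact S_induced_zero A S hS_bracket q x
  exact h hv


/-- `C p` of the induced algebra is contained in `C p` of `g`, for all `p`. -/
theorem lcs_induced_le (A : NLieSuper K V m) (S : V →ₗ[K] K)
    (hS_bracket : ∀ x : Fin (m + 1) → V, S (A.bracket x) = 0)
    (hS_odd : ∀ v ∈ A.odd, S v = 0) :
    ∀ p : ℕ, A.lcsInd S p ≤ A.lcs p := by
  intro p
  induction p with
  | zero => simp [NLieSuper.lcs, NLieSuper.lcsInd]
  | succ p ih =>
    rw [NLieSuper.lcsInd, Submodule.span_le]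
    rintro v ⟨q, x, hq, hx0, rfl⟩
    unfold NLieSuper.induced
    apply Submodule.sum_mem
    intro i _
    apply Submodule.smul_mem
    by_cases hi : i = 0
    · subst hi
      cases p with
      | zero =>
        apply Submodule.smul_mem
        rw [NLieSuper.lcs]
        exact Submodule.subset_span ⟨x ∘ (0 : Fin (m + 2)).succAbove, trivial, rfl⟩
      | succ p' =>
        rw [S_lcsInd_zero A S hS_bracket p' (x 0) hx0, zero_smul]
        exact Submodule.zero_mem _
    · apply Submodule.smul_mem
      rw [NLieSuper.lcs]
      apply Submodule.subset_span
      refine ⟨x ∘ i.succAbove, ?_, rfl⟩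
      have h0 : i.succAbove 0 = 0 := by
        rw [Fin.succAbove_of_castSucc_lt]
        · rfl
        · simpa using Fin.pos_of_ne_zero hi
      show x (i.succAbove 0) ∈ _
      rw [h0]
      exact ih hx0
end

section
/- Let (g, [·,…,·]) be an n-Lie superalgebra with supertrace S and induced (n+1)-Lie superalgebra g_S. If there exists g₀ ∈ g such that [g₀, x₁, …, x_n]_S = [x₁, …, x_n] for all x₁,…,x_n ∈ g, then C^p(g_S) = C^p(g) for all p ∈ ℕ. -/
variable {K V : Type} [Field K] [AddCommGroup V] [Module K V] {m : ℕ}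

namespace NLieSuper

/-- The bracket as a linear map in slot `i`. -/
def slotMap (A : NLieSuper K V m) (x : Fin (m + 1) → V) (i : Fin (m + 1)) : V →ₗ[K] V where
  toFun v := A.bracket (Function.update x i v)
  map_add' a b := A.bracket_add x i a b
  map_smul' c a := A.bracket_smul x i c a

def IsHom (A : NLieSuper K V m) (v : V) : Prop := v ∈ A.even ∨ v ∈ A.odd

lemma exists_parity (A : NLieSuper K V m) {k : ℕ} {y : Fin k → V}
    (h : ∀ i, A.IsHom (y i)) : ∃ q : Fin k → ℕ, A.HomogTuple q y := by
  classical
  refine ⟨fun i => if y i ∈ A.even then 0 else 1, fun i => ?_⟩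
  by_cases he : y i ∈ A.even
  · simp [Homog, he]
  · rcases h i with h1 | h1
    · exact absurd h1 he
    · simp [Homog, he, h1]

/-- Homogenization: brackets lie in the span of brackets of homogeneous tuples with
the same 0-th entry. -/
lemma bracket_mem_span_hom (A : NLieSuper K V m) :
    ∀ (k : ℕ) (x : Fin (m + 1) → V), A.IsHom (x 0) →
      (∀ i : Fin (m + 1), k ≤ (i : ℕ) → A.IsHom (x i)) →
      A.bracket x ∈ Submodule.span K
        {w | ∃ y : Fin (m + 1) → V, (∀ i, A.IsHom (y i)) ∧ y 0 = x 0 ∧ w = A.bracket y} := by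
  intro k
  induction k with
  | zero =>
    intro x h0 hk
    exact Submodule.subset_span ⟨x, fun i => hk i (Nat.zero_le _), rfl, rfl⟩
  | succ k ih =>
    intro x h0 hk
    by_cases hkm : k < m + 1
    · rcases Nat.eq_zero_or_pos k with rfl | hkpos
      · refine ih x h0 fun i hi => ?_
        rcases Nat.eq_zero_or_pos (i : ℕ) with h | h
        · have : i = 0 := Fin.ext h
          rw [this]; exact h0
        · exact hk i h
      · set i0 : Fin (m + 1) := ⟨k, hkm⟩ with hi0
        have hi0ne : i0 ≠ 0 := by
          simp [hi0, Fin.ext_iff]; omega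
        have hxm : x i0 ∈ A.even ⊔ A.odd := by rw [A.sup_eq]; trivial
        rcases Submodule.mem_sup.1 hxm with ⟨e, he, o, ho, heo⟩
        have hx : x = Function.update x i0 (e + o) := by
          rw [heo, Function.update_eq_self]
        have expand : A.bracket x =
            A.bracket (Function.update x i0 e) + A.bracket (Function.update x i0 o) := by
          conv_lhs => rw [hx]
          exact A.bracket_add x i0 e o
        rw [expand]
        have key : ∀ (a : V), A.IsHom a →
            A.bracket (Function.update x i0 a) ∈ Submodule.span K
              {w | ∃ y : Fin (m + 1) → V, (∀ i, A.IsHom (y i)) ∧ y 0 = x 0 ∧ w = A.bracket y} := by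
          intro a ha
          have h0' : Function.update x i0 a 0 = x 0 := Function.update_of_ne (Ne.symm hi0ne) _ _
          have := ih (Function.update x i0 a) (by rw [h0']; exact h0) ?_
          · rwa [h0'] at this
          · intro i hi
            rcases eq_or_ne i i0 with rfl | hne
            · rw [Function.update_self]; exact ha
            · rw [Function.update_of_ne hne]
              refine hk i ?_
              have : (i : ℕ) ≠ k := fun h => hne (Fin.ext h)
              omega
        exact Submodule.add_mem _ (key e (Or.inl he)) (key o (Or.inr ho))
    · exact ih x h0 fun i hi => absurd hi (by have := i.isLt; omega)
end NLieSuper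

namespace NLieSuper

def Gset (A : NLieSuper K V m) (p : ℕ) : Set V :=
  {v | ∃ (q : Fin (m + 1) → ℕ) (y : Fin (m + 1) → V),
    A.HomogTuple q y ∧ y 0 ∈ A.lcs p ∧ v = A.bracket y}

def HSset (A : NLieSuper K V m) (p : ℕ) : Set V :=
  {v | A.IsHom v ∧ v ∈ A.lcs p}

lemma isHom_of_homogTuple (A : NLieSuper K V m) {q : Fin (m + 1) → ℕ} {y : Fin (m + 1) → V}
    (h : A.HomogTuple q y) : A.IsHom (A.bracket y) := by
  have := A.degree q y h
  by_cases hp : (∑ i, q i) % 2 = 0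
  · rw [if_pos hp] at this; exact Or.inl this
  · rw [if_neg hp] at this; exact Or.inr this

lemma Gset_subset_HSset (A : NLieSuper K V m) (p : ℕ) :
    A.Gset p ⊆ A.HSset (p + 1) := by
  rintro v ⟨q, y, hy, hy0, rfl⟩
  refine ⟨A.isHom_of_homogTuple hy, ?_⟩
  exact Submodule.subset_span ⟨y, hy0, rfl⟩

lemma lcs_step (A : NLieSuper K V m) (p : ℕ)
    (h : A.lcs p ≤ Submodule.span K (A.HSset p)) :
    A.lcs (p + 1) ≤ Submodule.span K (A.Gset p) := by
  refine Submodule.span_le.2 ?_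
  rintro v ⟨x, hx0, rfl⟩
  have hx0' : x 0 ∈ Submodule.span K (A.HSset p) := h hx0
  have hbr : A.bracket x = A.slotMap x 0 (x 0) := by
    simp [slotMap, Function.update_eq_self]
  rw [hbr]
  have hmap : A.slotMap x 0 (x 0) ∈
      Submodule.map (A.slotMap x 0) (Submodule.span K (A.HSset p)) :=
    ⟨x 0, hx0', rfl⟩
  rw [Submodule.map_span] at hmap
  refine Submodule.span_le.2 ?_ hmap
  rintro w ⟨h0, ⟨hh, hmem⟩, rfl⟩
  -- slotMap x 0 h0 = bracket (update x 0 h0)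
  have hx0h : Function.update x 0 h0 0 = h0 := Function.update_self _ _ _
  have := A.bracket_mem_span_hom (m + 1) (Function.update x 0 h0)
    (by rw [hx0h]; exact hh) (fun i hi => absurd hi (by have := i.isLt; omega))
  refine Submodule.span_le.2 ?_ this
  rintro u ⟨y, hy, hy0, rfl⟩
  obtain ⟨q, hq⟩ := A.exists_parity hy
  exact Submodule.subset_span ⟨q, y, hq, by rw [hy0, hx0h]; exact hmem, rfl⟩

lemma lcs_le_span_HSset (A : NLieSuper K V m) : ∀ p, A.lcs p ≤ Submodule.span K (A.HSset p) := by
  intro p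
  induction p with
  | zero =>
    intro v _
    have hv : v ∈ A.even ⊔ A.odd := by rw [A.sup_eq]; trivial
    rcases Submodule.mem_sup.1 hv with ⟨e, he, o, ho, heo⟩
    rw [← heo]
    exact Submodule.add_mem _
      (Submodule.subset_span ⟨Or.inl he, trivial⟩)
      (Submodule.subset_span ⟨Or.inr ho, trivial⟩)
  | succ p ih =>
    exact (A.lcs_step p ih).trans (Submodule.span_mono (A.Gset_subset_HSset p))

lemma lcs_le_span_Gset (A : NLieSuper K V m) (p : ℕ) :
    A.lcs (p + 1) ≤ Submodule.span K (A.Gset p) :=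
  A.lcs_step p (A.lcs_le_span_HSset p)

lemma S_lcs_succ (A : NLieSuper K V m) (S : V →ₗ[K] K)
    (hS_bracket : ∀ x : Fin (m + 1) → V, S (A.bracket x) = 0) (p : ℕ) :
    ∀ v ∈ A.lcs (p + 1), S v = 0 := by
  have : A.lcs (p + 1) ≤ LinearMap.ker S := by
    refine Submodule.span_le.2 ?_
    rintro v ⟨x, _, rfl⟩
    exact hS_bracket x
  exact fun v hv => this hv

end NLieSuper

namespace NLieSuper

lemma neg_one_pow_mul_self' (k : ℕ) : ((-1 : K) ^ k) * ((-1 : K) ^ k) = 1 := by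
  rw [← pow_add]
  exact Even.neg_one_pow ⟨k, rfl⟩

lemma induced_comp_swap (A : NLieSuper K V m) (S : V →ₗ[K] K)
    (r : Fin (m + 2) → ℕ) (z : Fin (m + 2) → V) (hz : A.HomogTuple r z) :
    A.induced S (r ∘ Equiv.swap 0 1) (z ∘ Equiv.swap 0 1) =
      (-(-1 : K) ^ (r 0 * r 1)) • A.induced S r z := by
  set σ : Equiv.Perm (Fin (m + 2)) := Equiv.swap 0 1 with hσ
  have hσ0 : σ 0 = 1 := Equiv.swap_apply_left 0 1
  have hσ1 : σ 1 = 0 := Equiv.swap_apply_right 0 1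
  have hσi : ∀ i : Fin (m + 2), i ≠ 0 → i ≠ 1 → σ i = i := fun i h0 h1 =>
    Equiv.swap_apply_of_ne_of_ne h0 h1
  have hfilter0 : (Finset.univ.filter (fun j : Fin (m + 2) => j < 0)) = ∅ := by
    ext j; simp
  have hfilter1 : (Finset.univ.filter (fun j : Fin (m + 2) => j < 1)) = {0} := by
    ext j
    simp only [Finset.mem_filter, Finset.mem_univ, true_and, Finset.mem_singleton,
      Fin.lt_def, Fin.ext_iff, Fin.val_one, Fin.val_zero]
    omega
  rw [induced, induced, Finset.smul_sum]
  refine Fintype.sum_equiv σ _ _ ?_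
  intro i
  rcases eq_or_ne i 0 with rfl | hi0
  · -- left term at 0, right term at σ 0 = 1
    rw [hσ0]
    have htup : (z ∘ σ) ∘ (0 : Fin (m + 2)).succAbove = z ∘ (1 : Fin (m + 2)).succAbove := by
      funext j
      rcases eq_or_ne j 0 with rfl | hj
      · simp only [Function.comp_apply, Fin.zero_succAbove]
        rw [Fin.succAbove_of_castSucc_lt 1 0 (by rw [Fin.castSucc_zero]; exact Fin.lt_def.2 (by simp)),
          Fin.castSucc_zero]
        rw [show (0 : Fin (m + 1)).succ = (1 : Fin (m + 2)) from rfl, hσ1]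
      · have hjv : (j : ℕ) ≠ 0 := fun h => hj (Fin.ext h)
        simp only [Function.comp_apply, Fin.zero_succAbove]
        rw [Fin.succAbove_of_le_castSucc 1 j
          (by rw [Fin.le_def, Fin.coe_castSucc, Fin.val_one]; omega)]
        congr 1
        refine hσi _ (Fin.succ_ne_zero j) fun h => hjv ?_
        have h' := congrArg Fin.val h
        rw [Fin.val_succ, Fin.val_one] at h'
        omega
    rw [htup, hfilter0, hfilter1, Finset.sum_empty, Finset.sum_singleton]
    simp only [Function.comp_apply, hσ0, Fin.val_zero, Fin.val_one, Nat.mul_zero,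
      Nat.add_zero, pow_zero, one_smul]
    rw [smul_smul, smul_smul]
    congr 1
    rw [pow_add, pow_one, Nat.mul_comm (r 1) (r 0)]
    have h2 := neg_one_pow_mul_self' (K := K) (r 0 * r 1)
    linear_combination (-(S (z 1))) * h2
  rcases eq_or_ne i 1 with rfl | hi1
  · -- left term at 1, right term at σ 1 = 0
    rw [hσ1]
    have htup : (z ∘ σ) ∘ (1 : Fin (m + 2)).succAbove = z ∘ (0 : Fin (m + 2)).succAbove := by
      funext j
      rcases eq_or_ne j 0 with rfl | hj
      · simp only [Function.comp_apply, Fin.zero_succAbove]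
        rw [Fin.succAbove_of_castSucc_lt 1 0 (by rw [Fin.castSucc_zero]; exact Fin.lt_def.2 (by simp)),
          Fin.castSucc_zero, hσ0]
        rfl
      · have hjv : (j : ℕ) ≠ 0 := fun h => hj (Fin.ext h)
        simp only [Function.comp_apply, Fin.zero_succAbove]
        rw [Fin.succAbove_of_le_castSucc 1 j
          (by rw [Fin.le_def, Fin.coe_castSucc, Fin.val_one]; omega)]
        congr 1
        refine hσi _ (Fin.succ_ne_zero j) fun h => hjv ?_
        have h' := congrArg Fin.val h
        rw [Fin.val_succ, Fin.val_one] at h'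
        omega
    rw [htup, hfilter0, hfilter1, Finset.sum_empty, Finset.sum_singleton]
    simp only [Function.comp_apply, hσ0, hσ1, Fin.val_zero, Fin.val_one, Nat.mul_zero,
      Nat.add_zero, pow_zero, one_smul]
    rw [smul_smul, smul_smul]
    congr 1
    rw [pow_add, pow_one]
    ring
  · -- i ≥ 2
    have hiv0 : (i : ℕ) ≠ 0 := fun h => hi0 (Fin.ext h)
    have hiv1 : (i : ℕ) ≠ 1 := fun h => hi1 (by apply Fin.ext; rw [h, Fin.val_one])
    have hiv : 2 ≤ (i : ℕ) := by omega
    have hm1 : 1 ≤ m := by have := i.isLt; omega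
    have hσii : σ i = i := hσi i hi0 hi1
    have hs0 : i.succAbove 0 = 0 := by
      rw [Fin.succAbove_of_castSucc_lt i 0
        (by rw [Fin.castSucc_zero]; exact Fin.lt_def.2 (by rw [Fin.val_zero]; omega)),
        Fin.castSucc_zero]
    have h1v : ((1 : Fin (m + 1)) : ℕ) = 1 := by simp [Fin.val_one']; omega
    have hcs1 : (1 : Fin (m + 1)).castSucc = (1 : Fin (m + 2)) := by
      apply Fin.ext; rw [Fin.coe_castSucc, h1v, Fin.val_one]
    have hs1 : i.succAbove 1 = 1 := by
      rw [Fin.succAbove_of_castSucc_lt i 1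
        (by rw [hcs1]; exact Fin.lt_def.2 (by rw [Fin.val_one]; omega)), hcs1]
    have hsum : (∑ j ∈ Finset.univ.filter (fun j => j < i), (r ∘ σ) j) =
        ∑ j ∈ Finset.univ.filter (fun j => j < i), r j := by
      refine Finset.sum_equiv σ ?_ ?_
      · intro j
        simp only [Finset.mem_filter, Finset.mem_univ, true_and]
        rcases eq_or_ne j 0 with rfl | hj0
        · rw [hσ0]
          simp only [Fin.lt_def, Fin.val_zero, Fin.val_one]
          omega
        rcases eq_or_ne j 1 with rfl | hj1
        · rw [hσ1]
          simp only [Fin.lt_def, Fin.val_zero, Fin.val_one]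
          omega
        · rw [hσi j hj0 hj1]
      · intro j _
        rfl
    have htup : (z ∘ σ) ∘ i.succAbove =
        (z ∘ i.succAbove) ∘ Equiv.swap (0 : Fin (m + 1)) 1 := by
      funext j
      rcases eq_or_ne j 0 with rfl | hj0
      · simp only [Function.comp_apply, Equiv.swap_apply_left, hs0, hσ0, hs1]
      rcases eq_or_ne j 1 with rfl | hj1
      · simp only [Function.comp_apply, Equiv.swap_apply_right, hs1, hσ1, hs0]
      · simp only [Function.comp_apply, Equiv.swap_apply_of_ne_of_ne hj0 hj1]
        congr 1
        refine hσi _ ?_ ?_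
        · intro h; exact hj0 (Fin.succAbove_right_injective (h.trans hs0.symm))
        · intro h; exact hj1 (Fin.succAbove_right_injective (h.trans hs1.symm))
    have hσiv : (Equiv.swap (0 : Fin (m + 2)) 1) i = i := hσii
    set i0 : Fin m := ⟨0, by omega⟩ with hi0def
    have hcs : i0.castSucc = (0 : Fin (m + 1)) := by
      apply Fin.ext; simp [hi0def]
    have hsc : i0.succ = (1 : Fin (m + 1)) := by
      apply Fin.ext; rw [Fin.val_succ, h1v]
    have hskew := A.skew (r ∘ i.succAbove) (z ∘ i.succAbove) (fun j => hz _) i0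
    rw [hcs, hsc] at hskew
    simp only [Function.comp_apply, hs0, hs1] at hskew
    rw [hσiv]
    simp only [Function.comp_apply] at hsum
    simp only [Function.comp_apply, hσii]
    rw [hsum, htup, hskew]
    rw [smul_smul, smul_smul, smul_smul, smul_smul]
    congr 1
    ring

end NLieSuper

/-- if some `g0` satisfies `[g0, x1, ..., xn]_S = [x1, ..., xn]` for all
homogeneous tuples, then the descending central series of `g_S` and `g` coincide. -/
theorem lcs_induced_eq (A : NLieSuper K V m) (S : V →ₗ[K] K)
    (hS_bracket : ∀ x : Fin (m + 1) → V, S (A.bracket x) = 0)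
    (hS_odd : ∀ v ∈ A.odd, S v = 0)
    (hg : ∃ (g₀ : V) (p₀ : ℕ), A.Homog g₀ p₀ ∧
      ∀ (p : Fin (m + 1) → ℕ) (x : Fin (m + 1) → V), A.HomogTuple p x →
        A.induced S (Fin.cons p₀ p) (Fin.cons g₀ x) = A.bracket x) :
    ∀ p : ℕ, A.lcsInd S p = A.lcs p := by
  obtain ⟨g₀, p₀, hg₀, hgeq⟩ := hg
  intro p
  induction p with
  | zero => rfl
  | succ p ih =>
    apply le_antisymm
    · -- lcsInd (p+1) ≤ lcs (p+1)
      rw [NLieSuper.lcsInd]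
      refine Submodule.span_le.2 ?_
      rintro v ⟨q, x, hx, hx0, rfl⟩
      rw [ih] at hx0
      rw [NLieSuper.induced]
      refine Submodule.sum_mem _ ?_
      intro i _
      refine Submodule.smul_mem _ _ ?_
      rcases eq_or_ne i 0 with rfl | hi
      · cases p with
        | zero =>
          refine Submodule.smul_mem _ _ ?_
          exact Submodule.subset_span ⟨x ∘ Fin.succAbove 0, trivial, rfl⟩
        | succ p' =>
          rw [A.S_lcs_succ S hS_bracket p' _ hx0, zero_smul]
          exact Submodule.zero_mem _
      · refine Submodule.smul_mem _ _ ?_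
        refine Submodule.subset_span ⟨x ∘ i.succAbove, ?_, rfl⟩
        have hsa : i.succAbove 0 = 0 := by
          rw [Fin.succAbove_of_castSucc_lt i 0
            (by rw [Fin.castSucc_zero]; exact Fin.pos_of_ne_zero hi), Fin.castSucc_zero]
        show (x ∘ i.succAbove) 0 ∈ A.lcs p
        rw [Function.comp_apply, hsa]
        exact hx0
    · -- lcs (p+1) ≤ lcsInd (p+1)
      refine (A.lcs_le_span_Gset p).trans (Submodule.span_le.2 ?_)
      rintro v ⟨q, y, hy, hy0, rfl⟩
      have hcons : A.HomogTuple (Fin.cons p₀ q) (Fin.cons g₀ y) := by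
        intro i
        refine Fin.cases ?_ ?_ i
        · exact hg₀
        · intro j
          exact hy j
      have key := A.induced_comp_swap S (Fin.cons p₀ q) (Fin.cons g₀ y) hcons
      rw [hgeq q y hy] at key
      have h10 : (1 : Fin (m + 2)) = Fin.succ 0 := by
        apply Fin.ext; simp
      have hc0 : (Fin.cons p₀ q : Fin (m + 2) → ℕ) 0 = p₀ := Fin.cons_zero _ _
      have hc1 : (Fin.cons p₀ q : Fin (m + 2) → ℕ) 1 = q 0 := by
        rw [h10, Fin.cons_succ]
      rw [hc0, hc1] at key
      have hmem : A.induced S ((Fin.cons p₀ q) ∘ Equiv.swap 0 1)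
          ((Fin.cons g₀ y) ∘ Equiv.swap 0 1) ∈ A.lcsInd S (p + 1) := by
        rw [NLieSuper.lcsInd]
        refine Submodule.subset_span ⟨_, _, fun i => hcons _, ?_, rfl⟩
        show (Fin.cons g₀ y : Fin (m + 2) → V) ((Equiv.swap (0 : Fin (m + 2)) 1) 0) ∈ A.lcsInd S p
        rw [Equiv.swap_apply_left, h10, Fin.cons_succ, ih]
        exact hy0
      rw [key] at hmem
      have := Submodule.smul_mem _ (-(-1 : K) ^ (p₀ * q 0)) hmem
      rwa [smul_smul, neg_mul_neg, NLieSuper.neg_one_pow_mul_self', one_smul] at this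
end

section
/- Any 3-Lie superalgebra over ℂ whose underlying super vector space has dimension 1|1 (one even and one odd generator) is Abelian. -/
variable {K V : Type} [Field K] [AddCommGroup V] [Module K V] {m : ℕ}

set_option linter.unusedSectionVars false

section Aux

lemma upd0 {α : Type} (x : Fin 3 → α) (a : α) :
    Function.update x (0 : Fin 3) a = ![a, x 1, x 2] := by
  funext i; fin_cases i <;> simp
lemma upd1 {α : Type} (x : Fin 3 → α) (a : α) :
    Function.update x (1 : Fin 3) a = ![x 0, a, x 2] := by
  funext i; fin_cases i <;> simp
lemma upd2 {α : Type} (x : Fin 3 → α) (a : α) :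
    Function.update x (2 : Fin 3) a = ![x 0, x 1, a] := by
  funext i; fin_cases i <;> simp
lemma swap01 {α : Type} (u v w : α) : ![u,v,w] ∘ Equiv.swap (0:Fin 3) 1 = ![v,u,w] := by
  funext i; fin_cases i <;> simp [Equiv.swap_apply_def]
lemma swap12 {α : Type} (u v w : α) : ![u,v,w] ∘ Equiv.swap (1:Fin 3) 2 = ![u,w,v] := by
  funext i; fin_cases i <;> simp [Equiv.swap_apply_def]
lemma snoc2 {α : Type} (u v w : α) : (Fin.snoc ![u,v] w : Fin 3 → α) = ![u,v,w] := by
  funext i; fin_cases i <;> simp [Fin.snoc] <;> rfl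
lemma flt0 : Finset.univ.filter (fun j => j < (0:Fin 3)) = ∅ := by decide
lemma flt1 : Finset.univ.filter (fun j => j < (1:Fin 3)) = {0} := by decide
lemma flt2 : Finset.univ.filter (fun j => j < (2:Fin 3)) = {0,1} := by decide

variable {W : Type} [AddCommGroup W] [Module ℂ W] (A : NLieSuper ℂ W 2)

lemma br_add0 (u u' v w : W) :
    A.bracket ![u + u', v, w] = A.bracket ![u, v, w] + A.bracket ![u', v, w] := by
  have h := A.bracket_add ![u, v, w] 0 u u'
  simpa [upd0] using h
lemma br_add1 (u v v' w : W) :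
    A.bracket ![u, v + v', w] = A.bracket ![u, v, w] + A.bracket ![u, v', w] := by
  have h := A.bracket_add ![u, v, w] 1 v v'
  simpa [upd1] using h
lemma br_add2 (u v w w' : W) :
    A.bracket ![u, v, w + w'] = A.bracket ![u, v, w] + A.bracket ![u, v, w'] := by
  have h := A.bracket_add ![u, v, w] 2 w w'
  simpa [upd2] using h
lemma br_smul0 (c : ℂ) (u v w : W) :
    A.bracket ![c • u, v, w] = c • A.bracket ![u, v, w] := by
  have h := A.bracket_smul ![u, v, w] 0 c u
  simpa [upd0] using h
lemma br_smul1 (c : ℂ) (u v w : W) :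
    A.bracket ![u, c • v, w] = c • A.bracket ![u, v, w] := by
  have h := A.bracket_smul ![u, v, w] 1 c v
  simpa [upd1] using h
lemma br_smul2 (c : ℂ) (u v w : W) :
    A.bracket ![u, v, c • w] = c • A.bracket ![u, v, w] := by
  have h := A.bracket_smul ![u, v, w] 2 c w
  simpa [upd2] using h
lemma br_zero2 (u v : W) : A.bracket ![u, v, (0:W)] = 0 := by
  have h := br_smul2 A (0:ℂ) u v 0
  simpa using h

end Aux


lemma self_eq_neg_zero {W : Type} [AddCommGroup W] [Module ℂ W] {x : W} (h : x = -x) : x = 0 := by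
  have h2 : (2:ℂ) • x = 0 := by
    rw [two_smul]
    nth_rewrite 2 [h]
    simp
  simpa using (smul_eq_zero.mp h2).resolve_left (by norm_num)

/-- any 3-Lie superalgebra over the complex numbers of dimension `1|1` is Abelian. -/
theorem threeLieSuper_dim11_abelian {W : Type} [AddCommGroup W] [Module ℂ W]
    (A : NLieSuper ℂ W 2)
    (heven : Module.finrank ℂ A.even = 1) (hodd : Module.finrank ℂ A.odd = 1) :
    ∀ x : Fin 3 → W, A.bracket x = 0 := by
  classical
  -- generators
  obtain ⟨e₀, he₀, hespan⟩ := finrank_eq_one_iff'.mp heven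
  obtain ⟨f₀, hf₀, hfspan⟩ := finrank_eq_one_iff'.mp hodd
  set e : W := (e₀ : W) with he_def
  set f : W := (f₀ : W) with hf_def
  have he : e ∈ A.even := e₀.2
  have hf : f ∈ A.odd := f₀.2
  have hene : e ≠ 0 := fun h => he₀ (Subtype.ext h)
  have hfne : f ≠ 0 := fun h => hf₀ (Subtype.ext h)
  have hespan' : ∀ u ∈ A.even, ∃ c : ℂ, u = c • e := by
    intro u hu
    obtain ⟨c, hc⟩ := hespan ⟨u, hu⟩
    exact ⟨c, by simpa using congrArg Subtype.val hc.symm⟩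
  have hfspan' : ∀ u ∈ A.odd, ∃ c : ℂ, u = c • f := by
    intro u hu
    obtain ⟨c, hc⟩ := hfspan ⟨u, hu⟩
    exact ⟨c, by simpa using congrArg Subtype.val hc.symm⟩
  -- homogeneity certificates
  have hp_eee : ∀ i, if (![0,0,0] : Fin 3 → ℕ) i % 2 = 0 then ![e,e,e] i ∈ A.even
      else ![e,e,e] i ∈ A.odd := by intro i; fin_cases i <;> simp [he, hf]
  have hp_eef : ∀ i, if (![0,0,1] : Fin 3 → ℕ) i % 2 = 0 then ![e,e,f] i ∈ A.even
      else ![e,e,f] i ∈ A.odd := by intro i; fin_cases i <;> simp [he, hf]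
  have hp_efe : ∀ i, if (![0,1,0] : Fin 3 → ℕ) i % 2 = 0 then ![e,f,e] i ∈ A.even
      else ![e,f,e] i ∈ A.odd := by intro i; fin_cases i <;> simp [he, hf]
  have hp_fee : ∀ i, if (![1,0,0] : Fin 3 → ℕ) i % 2 = 0 then ![f,e,e] i ∈ A.even
      else ![f,e,e] i ∈ A.odd := by intro i; fin_cases i <;> simp [he, hf]
  have hp_eff : ∀ i, if (![0,1,1] : Fin 3 → ℕ) i % 2 = 0 then ![e,f,f] i ∈ A.even
      else ![e,f,f] i ∈ A.odd := by intro i; fin_cases i <;> simp [he, hf]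
  have hp_fef : ∀ i, if (![1,0,1] : Fin 3 → ℕ) i % 2 = 0 then ![f,e,f] i ∈ A.even
      else ![f,e,f] i ∈ A.odd := by intro i; fin_cases i <;> simp [he, hf]
  have hp_fff : ∀ i, if (![1,1,1] : Fin 3 → ℕ) i % 2 = 0 then ![f,f,f] i ∈ A.even
      else ![f,f,f] i ∈ A.odd := by intro i; fin_cases i <;> simp [he, hf]
  have hq_ff : ∀ i, if (![1,1] : Fin 2 → ℕ) i % 2 = 0 then ![f,f] i ∈ A.even
      else ![f,f] i ∈ A.odd := by intro i; fin_cases i <;> simp [he, hf]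
  have hq_ef : ∀ i, if (![0,1] : Fin 2 → ℕ) i % 2 = 0 then ![e,f] i ∈ A.even
      else ![e,f] i ∈ A.odd := by intro i; fin_cases i <;> simp [he, hf]
  -- easy vanishing from skew symmetry
  have heee : A.bracket ![e,e,e] = 0 := by
    have h := A.skew ![0,0,0] ![e,e,e] hp_eee 0
    rw [show (0:Fin 2).castSucc = 0 from rfl, show (0:Fin 2).succ = 1 from rfl,
      swap01] at h
    norm_num at h
    exact self_eq_neg_zero h
  have heef : A.bracket ![e,e,f] = 0 := by
    have h := A.skew ![0,0,1] ![e,e,f] hp_eef 0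
    rw [show (0:Fin 2).castSucc = 0 from rfl, show (0:Fin 2).succ = 1 from rfl,
      swap01] at h
    norm_num at h
    exact self_eq_neg_zero h
  have hefe : A.bracket ![e,f,e] = 0 := by
    have h := A.skew ![0,1,0] ![e,f,e] hp_efe 1
    rw [show (1:Fin 2).castSucc = 1 from rfl, show (1:Fin 2).succ = 2 from rfl,
      swap12] at h
    rw [heef] at h
    norm_num at h
    exact h
  have hfee : A.bracket ![f,e,e] = 0 := by
    have h := A.skew ![1,0,0] ![f,e,e] hp_fee 1
    rw [show (1:Fin 2).castSucc = 1 from rfl, show (1:Fin 2).succ = 2 from rfl,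
      swap12] at h
    norm_num at h
    exact self_eq_neg_zero h
  -- relations among the two-f brackets
  have hfef_rel : A.bracket ![f,e,f] = - A.bracket ![e,f,f] := by
    have h := A.skew ![0,1,1] ![e,f,f] hp_eff 0
    rw [show (0:Fin 2).castSucc = 0 from rfl, show (0:Fin 2).succ = 1 from rfl,
      swap01] at h
    norm_num at h
    simpa [neg_smul, one_smul] using h
  have hffe_rel : A.bracket ![f,f,e] = - A.bracket ![f,e,f] := by
    have h := A.skew ![1,0,1] ![f,e,f] hp_fef 1
    rw [show (1:Fin 2).castSucc = 1 from rfl, show (1:Fin 2).succ = 2 from rfl,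
      swap12] at h
    norm_num at h
    simpa [neg_smul, one_smul] using h
  -- degree facts
  have hfff_odd : A.bracket ![f,f,f] ∈ A.odd := by
    have h := A.degree ![1,1,1] ![f,f,f] hp_fff
    norm_num [Fin.sum_univ_three] at h
    exact h
  have heff_even : A.bracket ![e,f,f] ∈ A.even := by
    have h := A.degree ![0,1,1] ![e,f,f] hp_eff
    norm_num [Fin.sum_univ_three] at h
    exact h
  obtain ⟨b, hb⟩ := hfspan' _ hfff_odd
  obtain ⟨a, ha⟩ := hespan' _ heff_even
  -- uniform facts about the constant tuple ![f,f,f]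
  have hx : ∀ i : Fin (2+1), (![f,f,f] : Fin (2+1) → W) i = f := by
    intro i; fin_cases i <;> rfl
  have hupdf : ∀ i : Fin (2+1), Function.update ![f,f,f] i f = ![f,f,f] := by
    intro i; funext j; simp [Function.update_apply, hx]
  -- Filippov instance (A): kill [f,f,f]
  have hfff : A.bracket ![f,f,f] = 0 := by
    have hsm : ∀ i : Fin (2+1),
        A.bracket (Function.update ![f,f,f] i (b • f)) = b • (b • f) := by
      intro i
      have h := A.bracket_smul ![f,f,f] i b f
      rw [hupdf i] at h
      rw [h, hb]
    have hsgn : ∀ i : Fin (2+1),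
        ((-1:ℂ)) ^ ((∑ j ∈ Finset.univ.filter (fun j => j < i),
            (![1,1,1] : Fin (2+1) → ℕ) j) * (∑ j, (![1,1] : Fin 2 → ℕ) j)) = 1 := by
      intro i
      have h2 : (∑ j, (![1,1] : Fin 2 → ℕ) j) = 2 := by decide
      rw [h2, mul_comm, pow_mul]
      norm_num
    have FA := A.filippov ![1,1] ![f,f] ![1,1,1] ![f,f,f] hq_ff hp_fff
    simp only [hx, snoc2] at FA
    rw [hb] at FA
    simp only [hsm, hsgn, one_smul, br_smul2, hb, Finset.sum_const,
      Finset.card_univ, Fintype.card_fin] at FA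
    -- FA : b • (b • f) = 3 • (b • (b • f))
    have hX : ((3:ℂ) - 1) • (b • (b • f)) = 0 := by
      rw [sub_smul, one_smul]
      rw [show ((3:ℂ)) • (b • (b • f)) = (3:ℕ) • (b • (b • f)) from by
        rw [← Nat.cast_smul_eq_nsmul ℂ]; norm_num]
      rw [← FA]
      exact sub_self _
    have hbb : b • (b • f) = 0 := by
      have := smul_eq_zero.mp hX
      rcases this with h | h
      · exact absurd h (by norm_num)
      · exact h
    have : b = 0 := by
      rw [smul_smul] at hbb
      rcases smul_eq_zero.mp hbb with h | h
      · exact (mul_self_eq_zero).mp h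
      · exact absurd h hfne
    rw [hb, this, zero_smul]
  -- Filippov instance (B): kill [e,f,f]
  have heff : A.bracket ![e,f,f] = 0 := by
    have FB := A.filippov ![0,1] ![e,f] ![1,1,1] ![f,f,f] hq_ef hp_fff
    have harg : ∀ i : Fin (2+1),
        A.bracket (Fin.snoc ![e,f] ((![f,f,f] : Fin (2+1) → W) i)) = a • e := by
      intro i; rw [hx i, snoc2, ha]
    have ex : ∀ i : Fin (2+1), (∑ j ∈ Finset.univ.filter (fun j => j < i),
        (![1,1,1] : Fin (2+1) → ℕ) j) = i.val := by decide
    have hq1 : (∑ j, (![0,1] : Fin 2 → ℕ) j) = 1 := by decide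
    have ht0 : ((-1:ℂ)) ^ ((∑ j ∈ Finset.univ.filter (fun j => j < (0 : Fin (2+1))),
            (![1,1,1] : Fin (2+1) → ℕ) j) * (∑ j, (![0,1] : Fin 2 → ℕ) j)) •
          A.bracket (Function.update ![f,f,f] (0 : Fin (2+1))
            (A.bracket (Fin.snoc ![e,f] ((![f,f,f] : Fin (2+1) → W) 0)))) =
        a • A.bracket ![e,f,f] := by
      rw [harg 0, ex 0, hq1]
      rw [show Function.update ![f,f,f] (0 : Fin (2+1)) (a • e) = ![a • e, f, f] from by
        funext j; fin_cases j <;> simp]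
      rw [br_smul0]
      norm_num
    have ht1 : ((-1:ℂ)) ^ ((∑ j ∈ Finset.univ.filter (fun j => j < (1 : Fin (2+1))),
            (![1,1,1] : Fin (2+1) → ℕ) j) * (∑ j, (![0,1] : Fin 2 → ℕ) j)) •
          A.bracket (Function.update ![f,f,f] (1 : Fin (2+1))
            (A.bracket (Fin.snoc ![e,f] ((![f,f,f] : Fin (2+1) → W) 1)))) =
        a • A.bracket ![e,f,f] := by
      rw [harg 1, ex 1, hq1]
      rw [show Function.update ![f,f,f] (1 : Fin (2+1)) (a • e) = ![f, a • e, f] from by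
        funext j; fin_cases j <;> simp]
      rw [br_smul1, hfef_rel]
      norm_num
    have ht2 : ((-1:ℂ)) ^ ((∑ j ∈ Finset.univ.filter (fun j => j < (2 : Fin (2+1))),
            (![1,1,1] : Fin (2+1) → ℕ) j) * (∑ j, (![0,1] : Fin 2 → ℕ) j)) •
          A.bracket (Function.update ![f,f,f] (2 : Fin (2+1))
            (A.bracket (Fin.snoc ![e,f] ((![f,f,f] : Fin (2+1) → W) 2)))) =
        a • A.bracket ![e,f,f] := by
      rw [harg 2, ex 2, hq1]
      rw [show Function.update ![f,f,f] (2 : Fin (2+1)) (a • e) = ![f, f, a • e] from by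
        funext j; fin_cases j <;> simp]
      rw [br_smul2, hffe_rel, hfef_rel]
      norm_num
    have hterm : ∀ i : Fin (2+1),
        ((-1:ℂ)) ^ ((∑ j ∈ Finset.univ.filter (fun j => j < i),
            (![1,1,1] : Fin (2+1) → ℕ) j) * (∑ j, (![0,1] : Fin 2 → ℕ) j)) •
          A.bracket (Function.update ![f,f,f] i
            (A.bracket (Fin.snoc ![e,f] ((![f,f,f] : Fin (2+1) → W) i)))) =
        a • A.bracket ![e,f,f] := by
      intro i
      fin_cases i
      · exact ht0
      · exact ht1
      · exact ht2
    rw [hfff] at FB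
    rw [snoc2] at FB
    rw [br_zero2] at FB
    simp only [hterm, Finset.sum_const, Finset.card_univ, Fintype.card_fin] at FB
    -- FB : 0 = 3 • (a • A.bracket ![e,f,f])
    have h3 : (3:ℂ) • (a • A.bracket ![e,f,f]) = 0 := by
      rw [show ((3:ℂ)) • (a • A.bracket ![e,f,f]) = (3:ℕ) • (a • A.bracket ![e,f,f]) from by
        rw [← Nat.cast_smul_eq_nsmul ℂ]; norm_num]
      exact FB.symm
    have ha0 : a • A.bracket ![e,f,f] = 0 := by
      rcases smul_eq_zero.mp h3 with h | h
      · exact absurd h (by norm_num)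
      · exact h
    have : a = 0 := by
      rw [ha, smul_smul] at ha0
      rcases smul_eq_zero.mp ha0 with h | h
      · exact (mul_self_eq_zero).mp h
      · exact absurd h hene
    rw [ha, this, zero_smul]
  have hfef : A.bracket ![f,e,f] = 0 := by rw [hfef_rel, heff, neg_zero]
  have hffe : A.bracket ![f,f,e] = 0 := by rw [hffe_rel, hfef, neg_zero]
  -- general bracket vanishes by trilinearity
  intro x
  have hx0 : x = ![x 0, x 1, x 2] := by
    funext i; fin_cases i <;> rfl
  have hdec : ∀ w : W, ∃ c d : ℂ, w = c • e + d • f := by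
    intro w
    have hw : w ∈ A.even ⊔ A.odd := by rw [A.sup_eq]; trivial
    obtain ⟨u, hu, v, hv, huv⟩ := Submodule.mem_sup.mp hw
    obtain ⟨c, hc⟩ := hespan' u hu
    obtain ⟨d, hd⟩ := hfspan' v hv
    exact ⟨c, d, by rw [← huv, hc, hd]⟩
  obtain ⟨c0, d0, h0⟩ := hdec (x 0)
  obtain ⟨c1, d1, h1⟩ := hdec (x 1)
  obtain ⟨c2, d2, h2⟩ := hdec (x 2)
  rw [hx0, h0, h1, h2]
  simp only [br_add0, br_add1, br_add2, br_smul0, br_smul1, br_smul2,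
    heee, heef, hefe, hfee, heff, hfef, hffe, hfff, smul_zero, add_zero]
end

section
/- On the span of {γ_I : I ⊆ {1,…,n}} for n = 2m even, the trilinear bracket defined by [γ_I, γ_J, γ_K] = Str(γ_I)[γ_J,γ_K] − (−1)^{|I||J|} Str(γ_J)[γ_I,γ_K] + (−1)^{|K|(|I|+|J|)} Str(γ_K)[γ_I,γ_J] satisfies: [γ_I, γ_J, γ_K] = (2i)^m f(I,J) γ_{I Δ J} when I ≠ N, J ≠ N, K = N, and [γ_I, γ_J, γ_K] = 0 in all other cases where at most one of I, J, K equals N is violated or none equals N. -/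
set_option maxRecDepth 8000

open Finset

variable {m : ℕ}

/-- `sigma' I J = Σ_{j ∈ J} #{i ∈ I : i > j}`. -/
def sigma' (I J : Finset (Fin (2 * m))) : ℕ := ∑ j ∈ J, (I.filter (fun i => j < i)).card

/-- The basis vector `γ_I` of the Clifford superalgebra `C_n` (`n = 2m`), realized inside the
vector space of functions `Finset (Fin (2 * m)) → ℂ` (the span of the `γ_I`). -/
def γ (I : Finset (Fin (2 * m))) : Finset (Fin (2 * m)) → ℂ := Pi.single I 1

/-- The product on `C_n` (`n = 2m`), extending `γ_I γ_J = (−1)^{σ(I,J)} γ_{I Δ J}` bilinearly. -/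
noncomputable def cmul (x y : Finset (Fin (2 * m)) → ℂ) : Finset (Fin (2 * m)) → ℂ :=
  fun K => ∑ I : Finset (Fin (2 * m)), (-1 : ℂ) ^ sigma' I (symmDiff I K) * x I * y (symmDiff I K)

/-- `f(I,J) = (−1)^{σ(I,J)} (1 − (−1)^{|I ∩ J|})`. -/
def fconst (I J : Finset (Fin (2 * m))) : ℂ :=
  (-1 : ℂ) ^ sigma' I J * (1 - (-1 : ℂ) ^ (I ∩ J).card)

/-- The graded commutator `[γ_I, γ_J] = γ_I γ_J − (−1)^{|I||J|} γ_J γ_I` in `C_n`. -/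
noncomputable def gbr (I J : Finset (Fin (2 * m))) : Finset (Fin (2 * m)) → ℂ :=
  cmul (γ I) (γ J) - (-1 : ℂ) ^ (I.card * J.card) • cmul (γ J) (γ I)

/-- The supertrace on `C_n` (`n = 2m`): `Str(γ_I) = 0` for `I ≠ N` and `Str(γ_N) = (2i)^m`. -/
noncomputable def Str (m : ℕ) (x : Finset (Fin (2 * m)) → ℂ) : ℂ :=
  (2 * Complex.I) ^ m * x Finset.univ

/-- The induced ternary graded bracket
`[γ_I,γ_J,γ_K] = Str(γ_I)[γ_J,γ_K] − (−1)^{|I||J|} Str(γ_J)[γ_I,γ_K]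
  + (−1)^{|K|(|I|+|J|)} Str(γ_K)[γ_I,γ_J]`. -/
noncomputable def tbr (I J K : Finset (Fin (2 * m))) : Finset (Fin (2 * m)) → ℂ :=
  Str m (γ I) • gbr J K - (-1 : ℂ) ^ (I.card * J.card) • Str m (γ J) • gbr I K +
    (-1 : ℂ) ^ (K.card * (I.card + J.card)) • Str m (γ K) • gbr I J

lemma sigma_key (I J : Finset (Fin (2 * m))) :
    sigma' I J + sigma' J I + (I ∩ J).card = I.card * J.card := by
  have h1 : sigma' I J = ∑ j ∈ J, ∑ i ∈ I, if j < i then 1 else 0 := by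
    unfold sigma'; simp only [Finset.card_filter]
  have h2 : sigma' J I = ∑ j ∈ J, ∑ i ∈ I, if i < j then 1 else 0 := by
    unfold sigma'
    rw [Finset.sum_comm]
    simp only [Finset.card_filter]
  have h3 : (I ∩ J).card = ∑ j ∈ J, ∑ i ∈ I, if i = j then 1 else 0 := by
    rw [Finset.inter_comm, ← Finset.filter_mem_eq_inter, Finset.card_filter]
    refine Finset.sum_congr rfl fun j _ => ?_
    simp [Finset.sum_ite_eq']
  have h4 : I.card * J.card = ∑ j ∈ J, ∑ i ∈ I, 1 := by simp [mul_comm]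
  rw [h1, h2, h3, h4, ← Finset.sum_add_distrib, ← Finset.sum_add_distrib]
  refine Finset.sum_congr rfl fun j _ => ?_
  rw [← Finset.sum_add_distrib, ← Finset.sum_add_distrib]
  refine Finset.sum_congr rfl fun i _ => ?_
  rcases lt_trichotomy j i with h|h|h
  · simp [h, asymm h, h.ne']
  · subst h; simp [lt_irrefl]
  · simp [h, asymm h, h.ne]

lemma cmul_gamma (I J : Finset (Fin (2 * m))) :
    cmul (γ I) (γ J) = (-1 : ℂ) ^ sigma' I J • γ (symmDiff I J) := by
  funext K
  unfold cmul γ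
  rw [Finset.sum_eq_single I]
  · by_cases h : K = symmDiff I J
    · subst h
      rw [symmDiff_symmDiff_cancel_left]
      simp [Pi.single_eq_same]
    · have h2 : symmDiff I K ≠ J := by
        intro hc
        exact h (by rw [← hc, symmDiff_symmDiff_cancel_left])
      simp [Pi.single_apply, h2, h]
  · intro b _ hb
    simp [Pi.single_apply, hb]
  · intro hI; exact absurd (Finset.mem_univ I) hI

lemma gbr_eq (I J : Finset (Fin (2 * m))) :
    gbr I J = fconst I J • γ (symmDiff I J) := by
  unfold gbr
  rw [cmul_gamma, cmul_gamma, symmDiff_comm J I, smul_smul, ← sub_smul]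
  congr 1
  have key : sigma' I J + sigma' J I + (I ∩ J).card = I.card * J.card := sigma_key I J
  have h : ((-1 : ℂ)) ^ (I.card * J.card) * (-1) ^ sigma' J I
      = (-1) ^ sigma' I J * (-1) ^ (I ∩ J).card := by
    rw [← key]
    simp only [pow_add]
    ring_nf
    rw [show ((-1:ℂ) ^ (sigma' J I * 2)) = 1 by rw [pow_mul']; norm_num]
    ring
  unfold fconst
  rw [h]
  ring

lemma Str_gamma (I : Finset (Fin (2 * m))) :
    Str m (γ I) = if I = Finset.univ then (2 * Complex.I) ^ m else 0 := by
  unfold Str γ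
  split
  · next h => subst h; simp [Pi.single_eq_same]
  · next h => rw [Pi.single_eq_of_ne (Ne.symm h)]; ring

lemma neg_one_pow_sq (a : ℕ) : ((-1 : ℂ)) ^ a * (-1) ^ a = 1 := by
  rw [← pow_add, ← two_mul, pow_mul]; norm_num

lemma fconst_univ_univ : fconst (Finset.univ : Finset (Fin (2 * m))) Finset.univ = 0 := by
  unfold fconst
  rw [Finset.inter_self, Finset.card_univ, Fintype.card_fin, pow_mul]
  norm_num

lemma fsum (J : Finset (Fin (2 * m))) : fconst J Finset.univ + fconst Finset.univ J = 0 := by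
  have key : sigma' J Finset.univ + sigma' Finset.univ J + J.card = J.card * (2 * m) := by
    have := sigma_key J (Finset.univ : Finset (Fin (2 * m)))
    rwa [Finset.inter_univ, Finset.card_univ, Fintype.card_fin] at this
  set a := sigma' J (Finset.univ : Finset (Fin (2 * m))) with ha
  set b := sigma' (Finset.univ : Finset (Fin (2 * m))) J with hb
  set c := J.card with hc
  have h1 : ((-1 : ℂ)) ^ a * (-1) ^ b * (-1) ^ c = 1 := by
    rw [← pow_add, ← pow_add, key, show c * (2 * m) = 2 * (c * m) by ring, pow_mul]
    norm_num
  have hx : ((-1 : ℂ)) ^ a * (-1) ^ a = 1 := neg_one_pow_sq a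
  have hy : ((-1 : ℂ)) ^ b * (-1) ^ b = 1 := neg_one_pow_sq b
  unfold fconst
  rw [Finset.inter_univ, Finset.univ_inter, ← ha, ← hb, ← hc]
  linear_combination ((-1 : ℂ)) ^ a * (-1) ^ c * hy + ((-1 : ℂ)) ^ b * (-1) ^ c * hx -
    (((-1 : ℂ)) ^ a + (-1) ^ b) * h1

/-- `[γ_I,γ_J,γ_K] = (2i)^m f(I,J) γ_{I Δ J}` when `I ≠ N`, `J ≠ N`, `K = N`,
and the ternary bracket vanishes when none of `I, J, K` equals `N` or at least two of them
equal `N`. -/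
theorem tbr_eval (I J K : Finset (Fin (2 * m))) :
    (I ≠ Finset.univ → J ≠ Finset.univ → K = Finset.univ →
      tbr I J K = (2 * Complex.I) ^ m • fconst I J • γ (symmDiff I J)) ∧
    (((I ≠ Finset.univ ∧ J ≠ Finset.univ ∧ K ≠ Finset.univ) ∨
        (I = Finset.univ ∧ J = Finset.univ) ∨ (I = Finset.univ ∧ K = Finset.univ) ∨
        (J = Finset.univ ∧ K = Finset.univ)) → tbr I J K = 0) := by
  constructor
  · intro hI hJ hK
    subst hK
    unfold tbr
    rw [Str_gamma, Str_gamma, Str_gamma, if_neg hI, if_neg hJ, if_pos rfl,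
      Finset.card_univ, Fintype.card_fin,
      show 2 * m * (I.card + J.card) = 2 * (m * (I.card + J.card)) by ring, pow_mul]
    simp [gbr_eq]
  · rintro (⟨hI, hJ, hK⟩ | ⟨hI, hJ⟩ | ⟨hI, hK⟩ | ⟨hJ, hK⟩)
    · unfold tbr
      rw [Str_gamma, Str_gamma, Str_gamma, if_neg hI, if_neg hJ, if_neg hK]
      simp
    · subst hI; subst hJ
      unfold tbr
      rw [gbr_eq Finset.univ Finset.univ, fconst_univ_univ,
        show (Finset.univ : Finset (Fin (2 * m))).card * (Finset.univ : Finset (Fin (2 * m))).card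
          = 2 * (m * (Finset.univ : Finset (Fin (2 * m))).card) by
            rw [Finset.card_univ, Fintype.card_fin]; ring, pow_mul]
      simp
    · subst hI; subst hK
      unfold tbr
      rw [gbr_eq Finset.univ Finset.univ, fconst_univ_univ,
        show (Finset.univ : Finset (Fin (2 * m))).card *
            ((Finset.univ : Finset (Fin (2 * m))).card + J.card)
          = 2 * (m * ((Finset.univ : Finset (Fin (2 * m))).card + J.card)) by
            rw [Finset.card_univ, Fintype.card_fin]; ring, pow_mul]
      rw [Str_gamma, if_pos rfl, gbr_eq J Finset.univ, gbr_eq Finset.univ J,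
        symmDiff_comm (Finset.univ : Finset (Fin (2 * m))) J]
      simp only [smul_zero, zero_smul, smul_smul, pow_mul, neg_one_sq, one_pow, one_mul, sub_zero]
      rw [← add_smul, ← mul_add, fsum J]
      simp
    · subst hJ; subst hK
      unfold tbr
      rw [gbr_eq Finset.univ Finset.univ, fconst_univ_univ,
        show I.card * (Finset.univ : Finset (Fin (2 * m))).card = 2 * (I.card * m) by
          rw [Finset.card_univ, Fintype.card_fin]; ring,
        show (Finset.univ : Finset (Fin (2 * m))).card *
            (I.card + (Finset.univ : Finset (Fin (2 * m))).card)
          = 2 * (m * (I.card + (Finset.univ : Finset (Fin (2 * m))).card)) by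
            rw [Finset.card_univ, Fintype.card_fin]; ring,
        pow_mul, pow_mul]
      simp
end
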